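/- Let f be a piecewise contracting interval map with separation property, x ∈ X̃, θ its itinerary, and n₀ ≥ 1 the smallest integer such that every atom of generation n ≥ n₀ visited by the orbit of x contains at most one discontinuity. Then p(θ, n+1) = p(θ, n) + #Δ_lr^n(x) for all n ≥ n₀. -/

import Mathlib

open Set

/-- The contraction pieces of a piecewise contracting interval map on `[c 0, c N]`:
`X₁ = [c₀, c₁)`, `Xᵢ = (c_{i-1}, c_i)` for `1 < i < N`, `X_N = (c_{N-1}, c_N]`. -/
def ivlPiece (N : ℕ) (c : ℕ → ℝ) (i : Fin N) : Set ℝ :=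
  if i.val = 0 then Set.Ico (c 0) (c 1)
  else if i.val = N - 1 then Set.Ioc (c (N - 1)) (c N)
  else Set.Ioo (c i.val) (c (i.val + 1))

/-- The atom of a word `w = [i₁, …, iₙ]`:
`A_{i₁…iₙ} = F_{iₙ} ∘ ⋯ ∘ F_{i₁}(X)`, `F_i(A) = closure (f '' (A ∩ X_i))`, `X = [c 0, c N]`. -/
def ivlAtom (N : ℕ) (c : ℕ → ℝ) (f : ℝ → ℝ) (w : List (Fin N)) : Set ℝ :=
  w.foldl (fun A i => closure (f '' (A ∩ ivlPiece N c i))) (Set.Icc (c 0) (c N))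

/-- The discontinuity set `Δ = {c₁, …, c_{N-1}}`. -/
def ivlDelta (N : ℕ) (c : ℕ → ℝ) : Set ℝ :=
  {y | ∃ i : ℕ, 0 < i ∧ i < N ∧ y = c i}

/-- `Δ_lr^n(x)`: the discontinuities `c_i` that are n-left-right visited by the orbit of
`x`: some atom of generation `n` visited by the orbit of `f^n(x)` contains `c_i` and the
orbit enters it on both sides of `c_i`. -/
def ivlDeltaLRn (N : ℕ) (c : ℕ → ℝ) (f : ℝ → ℝ) (n : ℕ) (x : ℝ) : Set ℝ :=
  {y | ∃ i : ℕ, ∃ h1 : 0 < i, ∃ h2 : i < N, y = c i ∧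
    ∃ w : List (Fin N), w.length = n ∧ y ∈ ivlAtom N c f w ∧
      (∃ t : ℕ, f^[t + n] x ∈ ivlAtom N c f w ∩ ivlPiece N c ⟨i - 1, by omega⟩) ∧
      (∃ t : ℕ, f^[t + n] x ∈ ivlAtom N c f w ∩ ivlPiece N c ⟨i, h2⟩)}

/-- `Δ_lr(x)`: the discontinuities that are left-right recurrently visited. -/
def ivlDeltaLR (N : ℕ) (c : ℕ → ℝ) (f : ℝ → ℝ) (x : ℝ) : Set ℝ :=
  {y | ∀ n : ℕ, 1 ≤ n → y ∈ ivlDeltaLRn N c f n x}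

/-- The word `θ_t θ_{t+1} … θ_{t+n-1}`. -/
def itinWord {N : ℕ} (θ : ℕ → Fin N) (t n : ℕ) : List (Fin N) :=
  (List.range n).map fun k => θ (t + k)

/-- The set of factors of length `n` of `θ`. -/
def seqFactors {N : ℕ} (θ : ℕ → Fin N) (n : ℕ) : Set (List (Fin N)) :=
  {w | ∃ t : ℕ, w = itinWord θ t n}

/-- The complexity function `p(θ, n)`. -/
noncomputable def seqComplexity {N : ℕ} (θ : ℕ → Fin N) (n : ℕ) : ℕ :=
  (seqFactors θ n).ncard

section Aux

variable {N : ℕ} {c : ℕ → ℝ} {f : ℝ → ℝ} {g : Fin N → ℝ → ℝ} {θ : ℕ → Fin N} {x : ℝ}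

lemma cmono (hc : ∀ i : ℕ, i < N → c i < c (i + 1)) :
    ∀ i j : ℕ, i < j → j ≤ N → c i < c j := by
  intro i j hij hjN
  induction j with
  | zero => omega
  | succ k ih =>
    rcases Nat.lt_or_ge i k with h | h
    · exact lt_trans (ih h (by omega)) (hc k (by omega))
    · have : i = k := by omega
      subst this; exact hc i (by omega)

lemma cmono' (hc : ∀ i : ℕ, i < N → c i < c (i + 1)) :
    ∀ i j : ℕ, i ≤ j → j ≤ N → c i ≤ c j := by
  intro i j hij hjN
  rcases Nat.lt_or_ge i j with h | h
  · exact (cmono hc i j h hjN).le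
  · have : i = j := by omega
    subst this; rfl

lemma piece_sub (hN : 2 ≤ N) (i : Fin N) :
    ivlPiece N c i ⊆ Set.Icc (c i.val) (c (i.val + 1)) := by
  unfold ivlPiece
  split_ifs with h1 h2
  · rw [h1]; exact Ico_subset_Icc_self
  · rw [h2]; have : N - 1 + 1 = N := by omega
    rw [this]; exact Ioc_subset_Icc_self
  · exact Ioo_subset_Icc_self

lemma piece_lt (hN : 2 ≤ N) {i : Fin N} (hi : i.val < N - 1) {y : ℝ}
    (hy : y ∈ ivlPiece N c i) : y < c (i.val + 1) := by
  unfold ivlPiece at hy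
  split_ifs at hy with h1 h2
  · rw [h1]; exact hy.2
  · omega
  · exact hy.2

lemma piece_gt {i : Fin N} (hi : 0 < i.val) {y : ℝ}
    (hy : y ∈ ivlPiece N c i) : c i.val < y := by
  unfold ivlPiece at hy
  split_ifs at hy with h1 h2
  · omega
  · rw [h2]; exact hy.1
  · exact hy.1

lemma pieces_disjoint (hc : ∀ i : ℕ, i < N → c i < c (i + 1)) (hN : 2 ≤ N)
    {i j : Fin N} (hij : i ≠ j) :
    Disjoint (ivlPiece N c i) (ivlPiece N c j) := by
  have main : ∀ i j : Fin N, i.val < j.val →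
      Disjoint (ivlPiece N c i) (ivlPiece N c j) := by
    intro i j h
    rw [Set.disjoint_left]
    intro y hyi hyj
    have h1 : y < c (i.val + 1) := piece_lt hN (by omega) hyi
    have h2 : c j.val < y := piece_gt (by omega) hyj
    have h3 : c (i.val + 1) ≤ c j.val := cmono' hc _ _ (by omega) (by omega)
    linarith
  rcases Nat.lt_trichotomy i.val j.val with h | h | h
  · exact main i j h
  · exact absurd (Fin.ext h) hij
  · exact (main j i h).symm

lemma atom_concat (w : List (Fin N)) (a : Fin N) :
    ivlAtom N c f (w ++ [a]) =
      closure (f '' (ivlAtom N c f w ∩ ivlPiece N c a)) := by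
  simp [ivlAtom, List.foldl_append]

lemma atom_closed (w : List (Fin N)) : IsClosed (ivlAtom N c f w) := by
  induction w using List.reverseRecOn with
  | nil => exact isClosed_Icc
  | append_singleton u a ih => rw [atom_concat]; exact isClosed_closure

lemma atom_sub_X (hmap : Set.MapsTo f (Set.Icc (c 0) (c N)) (Set.Icc (c 0) (c N)))
    (w : List (Fin N)) : ivlAtom N c f w ⊆ Set.Icc (c 0) (c N) := by
  induction w using List.reverseRecOn with
  | nil => exact subset_rfl
  | append_singleton u a ih =>
    rw [atom_concat]
    apply closure_minimal _ isClosed_Icc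
    rintro y ⟨z, hz, rfl⟩
    exact hmap (ih hz.1)

lemma piece_ordConnected (i : Fin N) : (ivlPiece N c i).OrdConnected := by
  unfold ivlPiece
  split_ifs
  · exact ordConnected_Ico
  · exact ordConnected_Ioc
  · exact ordConnected_Ioo

lemma atom_preconn
    (hg : ∀ i : Fin N,
      ContinuousOn (g i) (closure (ivlPiece N c i)) ∧
      Set.EqOn (g i) f (ivlPiece N c i) ∧
      Set.InjOn (g i) (closure (ivlPiece N c i)) ∧
      ∀ j : Fin N, j ≠ i →
        Disjoint (g i '' closure (ivlPiece N c i)) (g j '' closure (ivlPiece N c j)))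
    (w : List (Fin N)) : IsPreconnected (ivlAtom N c f w) := by
  induction w using List.reverseRecOn with
  | nil => exact isPreconnected_Icc
  | append_singleton u a ih =>
    rw [atom_concat]
    apply IsPreconnected.closure
    apply IsPreconnected.image (ih.ordConnected.inter (piece_ordConnected a)).isPreconnected
    apply ContinuousOn.congr ((hg a).1.mono ?_) ?_
    · exact fun y hy => subset_closure hy.2
    · exact fun y hy => ((hg a).2.1 hy.2).symm

lemma atom_step_sub
    (hg : ∀ i : Fin N,
      ContinuousOn (g i) (closure (ivlPiece N c i)) ∧
      Set.EqOn (g i) f (ivlPiece N c i) ∧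
      Set.InjOn (g i) (closure (ivlPiece N c i)) ∧
      ∀ j : Fin N, j ≠ i →
        Disjoint (g i '' closure (ivlPiece N c i)) (g j '' closure (ivlPiece N c j)))
    {A : Set ℝ} (hA : IsClosed A) (hAX : A ⊆ Set.Icc (c 0) (c N)) (a : Fin N) :
    closure (f '' (A ∩ ivlPiece N c a)) ⊆ g a '' (A ∩ closure (ivlPiece N c a)) := by
  have himg : f '' (A ∩ ivlPiece N c a) = g a '' (A ∩ ivlPiece N c a) :=
    (Set.image_congr fun y hy => ((hg a).2.1 hy.2).symm)
  have hcpt : IsCompact (A ∩ closure (ivlPiece N c a)) := by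
    apply IsCompact.of_isClosed_subset isCompact_Icc (hA.inter isClosed_closure)
    exact fun y hy => hAX hy.1
  have hcpt2 : IsCompact (g a '' (A ∩ closure (ivlPiece N c a))) :=
    hcpt.image_of_continuousOn ((hg a).1.mono fun y hy => hy.2)
  apply closure_minimal _ hcpt2.isClosed
  rw [himg]
  exact Set.image_mono fun y hy => ⟨hy.1, subset_closure hy.2⟩

lemma atoms_disjoint
    (hmap : Set.MapsTo f (Set.Icc (c 0) (c N)) (Set.Icc (c 0) (c N)))
    (hg : ∀ i : Fin N,
      ContinuousOn (g i) (closure (ivlPiece N c i)) ∧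
      Set.EqOn (g i) f (ivlPiece N c i) ∧
      Set.InjOn (g i) (closure (ivlPiece N c i)) ∧
      ∀ j : Fin N, j ≠ i →
        Disjoint (g i '' closure (ivlPiece N c i)) (g j '' closure (ivlPiece N c j))) :
    ∀ (n : ℕ) (w w' : List (Fin N)), w.length = n → w'.length = n → w ≠ w' →
      Disjoint (ivlAtom N c f w) (ivlAtom N c f w') := by
  intro n
  induction n with
  | zero =>
    intro w w' hw hw' hne
    rw [List.length_eq_zero_iff] at hw hw'
    exact absurd (hw.trans hw'.symm) hne
  | succ m ih =>
    intro w w' hw hw' hne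
    rcases List.eq_nil_or_concat w with rfl | ⟨u, a, rfl⟩
    · simp at hw
    rcases List.eq_nil_or_concat w' with rfl | ⟨u', b, rfl⟩
    · simp at hw'
    rw [List.concat_eq_append, List.concat_eq_append] at *
    rw [atom_concat, atom_concat]
    have hu : u.length = m := by simpa using hw
    have hu' : u'.length = m := by simpa using hw'
    have h1 := atom_step_sub hg (atom_closed u) (atom_sub_X hmap u) a
    have h2 := atom_step_sub hg (atom_closed u') (atom_sub_X hmap u') b
    by_cases hab : a = b
    · subst hab
      have hune : u ≠ u' := by rintro rfl; exact hne rfl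
      have hd := ih u u' hu hu' hune
      apply Set.disjoint_of_subset h1 h2
      rw [Set.disjoint_left]
      rintro y ⟨z, hz, rfl⟩ ⟨z', hz', hzz⟩
      have : z = z' := (hg a).2.2.1 hz.2 hz'.2 hzz.symm
      subst this
      exact (Set.disjoint_left.1 hd) hz.1 hz'.1
    · apply Set.disjoint_of_subset
        (h1.trans (Set.image_mono fun y hy => hy.2))
        (h2.trans (Set.image_mono fun y hy => hy.2))
      exact ((hg b).2.2.2 a hab).symm

lemma itinWord_length (t n : ℕ) : (itinWord θ t n).length = n := by
  simp [itinWord]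

lemma itinWord_succ (t n : ℕ) :
    itinWord θ t (n + 1) = itinWord θ t n ++ [θ (t + n)] := by
  simp [itinWord, List.range_succ]

lemma orbit_mem_X (hmap : Set.MapsTo f (Set.Icc (c 0) (c N)) (Set.Icc (c 0) (c N)))
    (hx : x ∈ Set.Icc (c 0) (c N)) : ∀ t : ℕ, f^[t] x ∈ Set.Icc (c 0) (c N) := by
  intro t
  induction t with
  | zero => exact hx
  | succ k ih => rw [Function.iterate_succ_apply']; exact hmap ih

lemma orbit_in_atom (hmap : Set.MapsTo f (Set.Icc (c 0) (c N)) (Set.Icc (c 0) (c N)))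
    (hx : x ∈ Set.Icc (c 0) (c N))
    (hθ : ∀ t : ℕ, f^[t] x ∈ ivlPiece N c (θ t)) :
    ∀ t n : ℕ, f^[t + n] x ∈ ivlAtom N c f (itinWord θ t n) := by
  intro t n
  induction n with
  | zero => exact orbit_mem_X hmap hx t
  | succ k ih =>
    rw [itinWord_succ, atom_concat]
    have : t + (k + 1) = (t + k) + 1 := by omega
    rw [this, Function.iterate_succ_apply']
    exact subset_closure ⟨f^[t + k] x, ⟨ih, hθ (t + k)⟩, rfl⟩

lemma word_eq
    (hmap : Set.MapsTo f (Set.Icc (c 0) (c N)) (Set.Icc (c 0) (c N)))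
    (hg : ∀ i : Fin N,
      ContinuousOn (g i) (closure (ivlPiece N c i)) ∧
      Set.EqOn (g i) f (ivlPiece N c i) ∧
      Set.InjOn (g i) (closure (ivlPiece N c i)) ∧
      ∀ j : Fin N, j ≠ i →
        Disjoint (g i '' closure (ivlPiece N c i)) (g j '' closure (ivlPiece N c j)))
    (hx : x ∈ Set.Icc (c 0) (c N))
    (hθ : ∀ t : ℕ, f^[t] x ∈ ivlPiece N c (θ t))
    (m t : ℕ) (w : List (Fin N)) (hwl : w.length = m)
    (hmem : f^[t + m] x ∈ ivlAtom N c f w) : w = itinWord θ t m := by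
  by_contra hne
  exact Set.disjoint_left.1
    (atoms_disjoint hmap hg m w (itinWord θ t m) hwl (itinWord_length t m) hne)
    hmem (orbit_in_atom hmap hx hθ t m)

end Aux

/-- For `n ≥ n₀` (the smallest integer such that atoms of generation `≥ n₀` visited by
the orbit of `x` contain at most one discontinuity):
`p(θ,n+1) = p(θ,n) + #Δ_lr^n(x)`. -/
theorem stmt10
    (N : ℕ) (hN : 2 ≤ N) (c : ℕ → ℝ) (hc : ∀ i : ℕ, i < N → c i < c (i + 1))
    (f : ℝ → ℝ) (hmap : Set.MapsTo f (Set.Icc (c 0) (c N)) (Set.Icc (c 0) (c N)))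
    (lam : ℝ) (hlam : lam ∈ Set.Ioo (0 : ℝ) 1)
    (hcontr : ∀ i : Fin N, ∀ x ∈ ivlPiece N c i, ∀ y ∈ ivlPiece N c i,
      |f x - f y| ≤ lam * |x - y|)
    (hsep : ∃ g : Fin N → ℝ → ℝ, ∀ i : Fin N,
      ContinuousOn (g i) (closure (ivlPiece N c i)) ∧
      Set.EqOn (g i) f (ivlPiece N c i) ∧
      Set.InjOn (g i) (closure (ivlPiece N c i)) ∧
      ∀ j : Fin N, j ≠ i →
        Disjoint (g i '' closure (ivlPiece N c i)) (g j '' closure (ivlPiece N c j)))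
    (x : ℝ) (hx : x ∈ Set.Icc (c 0) (c N))
    (hxD : ∀ t : ℕ, f^[t] x ∉ ivlDelta N c)
    (θ : ℕ → Fin N) (hθ : ∀ t : ℕ, f^[t] x ∈ ivlPiece N c (θ t))
    (n₀ : ℕ) (hn₀ : IsLeast {m : ℕ | 1 ≤ m ∧ ∀ n : ℕ, m ≤ n → ∀ w : List (Fin N),
      w.length = n → (∃ t : ℕ, f^[t + n] x ∈ ivlAtom N c f w) →
      (ivlAtom N c f w ∩ ivlDelta N c).ncard ≤ 1} n₀)
    :
    ∀ n : ℕ, n₀ ≤ n →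
      seqComplexity θ (n + 1) = seqComplexity θ n + (ivlDeltaLRn N c f n x).ncard := by
  classical
  obtain ⟨g, hg⟩ := hsep
  obtain ⟨⟨hn₀1, hone⟩, -⟩ := hn₀
  intro n hn
  have hone' := hone n hn
  -- finiteness of factor sets
  have hFn : (seqFactors θ n).Finite := by
    apply (List.finite_length_eq (α := Fin N) (n := n)).subset
    rintro w ⟨t, rfl⟩; exact itinWord_length t n
  have hFn1 : (seqFactors θ (n + 1)).Finite := by
    apply (List.finite_length_eq (α := Fin N) (n := n + 1)).subset
    rintro w ⟨t, rfl⟩; exact itinWord_length t (n + 1)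
  have hΔfin : (ivlDelta N c).Finite := by
    apply ((Set.finite_Iio N).image c).subset
    rintro y ⟨i, h1, h2, rfl⟩; exact ⟨i, h2, rfl⟩
  have hAΔfin : ∀ w : List (Fin N), (ivlAtom N c f w ∩ ivlDelta N c).Finite :=
    fun w => hΔfin.subset Set.inter_subset_right
  set s : Finset (List (Fin N)) := hFn.toFinset with hs
  set s1 : Finset (List (Fin N)) := hFn1.toFinset with hs1
  have hlen : ∀ w ∈ seqFactors θ n, w.length = n := by
    rintro w ⟨t, rfl⟩; exact itinWord_length t n
  -- extension characterization
  have mem_ext : ∀ (w : List (Fin N)) (a : Fin N), w.length = n →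
      ((w ++ [a]) ∈ seqFactors θ (n + 1) ↔ ∃ t, w = itinWord θ t n ∧ θ (t + n) = a) := by
    intro w a hwl
    constructor
    · rintro ⟨t, heq⟩
      rw [itinWord_succ] at heq
      have hl : w.length = (itinWord θ t n).length := by rw [itinWord_length, hwl]
      obtain ⟨h1, h2⟩ := List.append_inj heq hl
      exact ⟨t, h1, by simpa using h2.symm⟩
    · rintro ⟨t, rfl, rfl⟩
      exact ⟨t, (itinWord_succ t n).symm⟩
  -- the extension sets
  set E : List (Fin N) → Finset (Fin N) :=
    fun w => Finset.univ.filter (fun a => (w ++ [a]) ∈ seqFactors θ (n + 1)) with hE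
  -- fibers of dropLast
  have hdrop : ∀ u ∈ s1, u.dropLast ∈ s := by
    intro u hu
    rw [hs1, Set.Finite.mem_toFinset] at hu
    obtain ⟨t, rfl⟩ := hu
    rw [hs, Set.Finite.mem_toFinset, itinWord_succ]
    exact ⟨t, by simp⟩
  have hfib : ∀ w ∈ s, s1.filter (fun u => u.dropLast = w)
      = (E w).image (fun a => w ++ [a]) := by
    intro w hw
    ext u
    simp only [Finset.mem_filter, Finset.mem_image, hE, Finset.mem_univ, true_and,
      hs1, Set.Finite.mem_toFinset]
    constructor
    · rintro ⟨⟨t, rfl⟩, hd⟩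
      rw [itinWord_succ] at hd
      simp only [List.dropLast_concat] at hd
      refine ⟨θ (t + n), ?_, ?_⟩
      · rw [← hd]; exact ⟨t, (itinWord_succ t n).symm⟩
      · rw [itinWord_succ, hd]
    · rintro ⟨a, ha, rfl⟩
      exact ⟨ha, by simp⟩
  have hcard : s1.card = ∑ w ∈ s, (E w).card := by
    rw [Finset.card_eq_sum_card_fiberwise hdrop]
    apply Finset.sum_congr rfl
    intro w hw
    rw [hfib w hw, Finset.card_image_of_injective]
    intro a b hab
    simpa using hab
  -- the key geometric pair lemma
  have pair : ∀ (w : List (Fin N)) (a b : Fin N) (ta tb : ℕ),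
      w = itinWord θ ta n → θ (ta + n) = a → w = itinWord θ tb n → θ (tb + n) = b →
      a.val < b.val →
      b.val = a.val + 1 ∧ c (a.val + 1) ∈ ivlAtom N c f w := by
    intro w a b ta tb hwa hθa hwb hθb hab
    have hwl : w.length = n := by rw [hwa]; exact itinWord_length ta n
    have hpa : f^[ta + n] x ∈ ivlAtom N c f w := by
      rw [hwa]; exact orbit_in_atom hmap hx hθ ta n
    have hpb : f^[tb + n] x ∈ ivlAtom N c f w := by
      rw [hwb]; exact orbit_in_atom hmap hx hθ tb n
    have hpa' : f^[ta + n] x ∈ ivlPiece N c a := by rw [← hθa]; exact hθ (ta + n)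
    have hpb' : f^[tb + n] x ∈ ivlPiece N c b := by rw [← hθb]; exact hθ (tb + n)
    have hoc : (ivlAtom N c f w).OrdConnected := (atom_preconn hg w).ordConnected
    have hb1 : 0 < b.val := by omega
    have haN : a.val < N - 1 := by have := b.isLt; omega
    have h1 : f^[ta + n] x < c (a.val + 1) := piece_lt hN haN hpa'
    have h2 : c b.val < f^[tb + n] x := piece_gt hb1 hpb'
    have h3 : c (a.val + 1) ≤ c b.val := cmono' hc _ _ (by omega) (by omega)
    have hmemc : c (a.val + 1) ∈ ivlAtom N c f w :=
      hoc.out hpa hpb ⟨h1.le, le_trans h3 h2.le⟩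
    refine ⟨?_, hmemc⟩
    by_contra hbne
    have hblt : a.val + 1 < b.val := by omega
    have hmemc2 : c b.val ∈ ivlAtom N c f w :=
      hoc.out hpa hpb ⟨le_trans h1.le h3, h2.le⟩
    have hcne : c (a.val + 1) ≠ c b.val :=
      ne_of_lt (cmono hc _ _ hblt (by omega))
    have h2card : 1 < (ivlAtom N c f w ∩ ivlDelta N c).ncard := by
      rw [Set.one_lt_ncard (hAΔfin w)]
      refine ⟨c (a.val + 1), ⟨hmemc, ⟨a.val + 1, by omega, by omega, rfl⟩⟩,
        c b.val, ⟨hmemc2, ⟨b.val, by omega, b.isLt, rfl⟩⟩, hcne⟩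
    have := hone' w hwl ⟨ta, hpa⟩
    omega
  -- every factor has at least one extension
  have Epos : ∀ w ∈ s, 1 ≤ (E w).card := by
    intro w hw
    rw [hs, Set.Finite.mem_toFinset] at hw
    obtain ⟨t, rfl⟩ := hw
    refine Finset.card_pos.2 ⟨θ (t + n), ?_⟩
    simp only [hE, Finset.mem_filter, Finset.mem_univ, true_and]
    exact ⟨t, (itinWord_succ t n).symm⟩
  have adj : ∀ w ∈ s, ∀ a ∈ E w, ∀ b ∈ E w, a.val < b.val →
      b.val = a.val + 1 ∧ c (a.val + 1) ∈ ivlAtom N c f w := by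
    intro w hw a ha b hb hab
    rw [hs, Set.Finite.mem_toFinset] at hw
    have hwl := hlen w hw
    simp only [hE, Finset.mem_filter, Finset.mem_univ, true_and] at ha hb
    obtain ⟨ta, hwa, hθa⟩ := (mem_ext w a hwl).1 ha
    obtain ⟨tb, hwb, hθb⟩ := (mem_ext w b hwl).1 hb
    exact pair w a b ta tb hwa hθa hwb hθb hab
  have Ele : ∀ w ∈ s, (E w).card ≤ 2 := by
    intro w hw
    by_contra h
    rw [not_le] at h
    obtain ⟨a, b, d, ha, hb, hd, hab, had, hbd⟩ := Finset.two_lt_card_iff.1 h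
    have vab : a.val ≠ b.val := fun h' => hab (Fin.ext h')
    have vad : a.val ≠ d.val := fun h' => had (Fin.ext h')
    have vbd : b.val ≠ d.val := fun h' => hbd (Fin.ext h')
    have k1 : ∀ (p q : Fin N), p ∈ E w → q ∈ E w → p.val ≠ q.val →
        q.val = p.val + 1 ∨ p.val = q.val + 1 := by
      intro p q hp hq hpq
      rcases Nat.lt_trichotomy p.val q.val with h' | h' | h'
      · exact Or.inl (adj w hw p hp q hq h').1
      · omega
      · exact Or.inr (adj w hw q hq p hp h').1
    rcases k1 a b ha hb vab with h1 | h1 <;>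
      rcases k1 a d ha hd vad with h2 | h2 <;>
      rcases k1 b d hb hd vbd with h3 | h3 <;> omega
  set RS : Finset (List (Fin N)) := s.filter (fun w => 2 ≤ (E w).card) with hRS
  have hsum : ∑ w ∈ s, (E w).card = s.card + RS.card := by
    have heach : ∀ w ∈ s, (E w).card = 1 + (if 2 ≤ (E w).card then 1 else 0) := by
      intro w hw
      have h1 := Epos w hw
      have h2 := Ele w hw
      split_ifs with h <;> omega
    rw [Finset.sum_congr rfl heach, Finset.sum_add_distrib]
    congr 1
    · simp
    · rw [hRS]
      exact (Finset.card_filter _ _).symm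
  -- unique discontinuity in a visited atom
  have hsing : ∀ w : List (Fin N), w.length = n →
      (∃ t, f^[t + n] x ∈ ivlAtom N c f w) →
      ∀ y ∈ ivlAtom N c f w ∩ ivlDelta N c,
        ivlAtom N c f w ∩ ivlDelta N c = {y} := by
    intro w hwl hvis y hy
    rw [Set.eq_singleton_iff_unique_mem]
    refine ⟨hy, fun z hz => ?_⟩
    by_contra hzy
    have h2 : 1 < (ivlAtom N c f w ∩ ivlDelta N c).ncard :=
      (Set.one_lt_ncard (hAΔfin w)).2 ⟨z, hz, y, hy, hzy⟩
    have := hone' w hwl hvis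
    omega
  set dd : List (Fin N) → ℝ := fun w => sInf (ivlAtom N c f w ∩ ivlDelta N c) with hdd
  -- image of RS under dd lies in Δ_lr^n
  have himg : ∀ w ∈ RS, dd w ∈ ivlDeltaLRn N c f n x ∧ dd w ∈ ivlAtom N c f w := by
    intro w hw
    rw [hRS, Finset.mem_filter] at hw
    obtain ⟨hws, hcard2⟩ := hw
    have hwmem : w ∈ seqFactors θ n := by
      rw [hs, Set.Finite.mem_toFinset] at hws; exact hws
    have hwl := hlen w hwmem
    have main : ∀ a b : Fin N, a ∈ E w → b ∈ E w → a.val < b.val →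
        dd w ∈ ivlDeltaLRn N c f n x ∧ dd w ∈ ivlAtom N c f w := by
      intro a b ha hb hlt
      simp only [hE, Finset.mem_filter, Finset.mem_univ, true_and] at ha hb
      obtain ⟨ta, hwa, hθa⟩ := (mem_ext w a hwl).1 ha
      obtain ⟨tb, hwb, hθb⟩ := (mem_ext w b hwl).1 hb
      obtain ⟨hb1, hcm⟩ := pair w a b ta tb hwa hθa hwb hθb hlt
      have hiN : a.val + 1 < N := by have := b.isLt; omega
      have hyΔ : c (a.val + 1) ∈ ivlAtom N c f w ∩ ivlDelta N c :=
        ⟨hcm, ⟨a.val + 1, by omega, hiN, rfl⟩⟩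
      have hvisa : f^[ta + n] x ∈ ivlAtom N c f w := by
        rw [hwa]; exact orbit_in_atom hmap hx hθ ta n
      have hvisb : f^[tb + n] x ∈ ivlAtom N c f w := by
        rw [hwb]; exact orbit_in_atom hmap hx hθ tb n
      have hsingl := hsing w hwl ⟨ta, hvisa⟩ _ hyΔ
      have hddw : dd w = c (a.val + 1) := by
        rw [hdd]; simp only; rw [hsingl]; exact csInf_singleton _
      rw [hddw]
      refine ⟨⟨a.val + 1, by omega, hiN, rfl, w, hwl, hcm, ⟨ta, hvisa, ?_⟩,
        ⟨tb, hvisb, ?_⟩⟩, hcm⟩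
      · have h5 : f^[ta + n] x ∈ ivlPiece N c a := by
          rw [← hθa]; exact hθ (ta + n)
        exact h5
      · have h5 : f^[tb + n] x ∈ ivlPiece N c b := by
          rw [← hθb]; exact hθ (tb + n)
        convert h5 using 2
        exact Fin.ext (by simp [hb1])
    obtain ⟨a, ha, b, hb, hab⟩ := Finset.one_lt_card.1 (by omega : 1 < (E w).card)
    rcases Nat.lt_trichotomy a.val b.val with h' | h' | h'
    · exact main a b ha hb h'
    · exact absurd (Fin.ext h') hab
    · exact main b a hb ha h'
  have memsfac : ∀ w : List (Fin N), w ∈ s → w ∈ seqFactors θ n := by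
    intro w hw; rw [hs, Set.Finite.mem_toFinset] at hw; exact hw
  have RSsub : ∀ w : List (Fin N), w ∈ RS → w ∈ s := by
    intro w hw; rw [hRS, Finset.mem_filter] at hw; exact hw.1
  -- injectivity of dd on RS
  have hinj : Set.InjOn dd ↑RS := by
    intro w hw w' hw' heq
    by_contra hne
    have hw2 : w ∈ RS := Finset.mem_coe.1 hw
    have hw2' : w' ∈ RS := Finset.mem_coe.1 hw'
    have hwl : w.length = n := hlen w (memsfac w (RSsub w hw2))
    have hwl' : w'.length = n := hlen w' (memsfac w' (RSsub w' hw2'))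
    have h1 := (himg w hw2).2
    have h2 := (himg w' hw2').2
    rw [heq] at h1
    exact Set.disjoint_left.1 (atoms_disjoint hmap hg n w w' hwl hwl' hne) (heq ▸ h1) h2
  -- surjectivity onto Δ_lr^n
  have hsurj : ivlDeltaLRn N c f n x ⊆ dd '' ↑RS := by
    rintro y ⟨i, h1, h2, rfl, w, hwl, hyA, ⟨ta, hta⟩, ⟨tb, htb⟩⟩
    have hwa : w = itinWord θ ta n := word_eq hmap hg hx hθ n ta w hwl hta.1
    have hwb : w = itinWord θ tb n := word_eq hmap hg hx hθ n tb w hwl htb.1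
    have hws : w ∈ s := by
      rw [hs, Set.Finite.mem_toFinset]; exact ⟨ta, hwa⟩
    have hθa : θ (ta + n) = (⟨i - 1, by omega⟩ : Fin N) := by
      by_contra hne
      exact Set.disjoint_left.1 (pieces_disjoint hc hN hne) (hθ (ta + n)) hta.2
    have hθb : θ (tb + n) = (⟨i, h2⟩ : Fin N) := by
      by_contra hne
      exact Set.disjoint_left.1 (pieces_disjoint hc hN hne) (hθ (tb + n)) htb.2
    have hain : (⟨i - 1, by omega⟩ : Fin N) ∈ E w := by
      simp only [hE, Finset.mem_filter, Finset.mem_univ, true_and]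
      exact (mem_ext w _ hwl).2 ⟨ta, hwa, hθa⟩
    have hbin : (⟨i, h2⟩ : Fin N) ∈ E w := by
      simp only [hE, Finset.mem_filter, Finset.mem_univ, true_and]
      exact (mem_ext w _ hwl).2 ⟨tb, hwb, hθb⟩
    have hne : (⟨i - 1, by omega⟩ : Fin N) ≠ (⟨i, h2⟩ : Fin N) := by
      intro h
      have := Fin.val_eq_of_eq h
      simp at this
      omega
    have hwRS : w ∈ RS := by
      rw [hRS, Finset.mem_filter]
      exact ⟨hws, Finset.one_lt_card.2 ⟨_, hain, _, hbin, hne⟩⟩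
    refine ⟨w, by simpa using hwRS, ?_⟩
    have hyΔ : c i ∈ ivlAtom N c f w ∩ ivlDelta N c := ⟨hyA, ⟨i, h1, h2, rfl⟩⟩
    have hsingl := hsing w hwl ⟨ta, hta.1⟩ _ hyΔ
    rw [hdd]; simp only; rw [hsingl]; exact csInf_singleton _
  have himgeq : dd '' ↑RS = ivlDeltaLRn N c f n x := by
    apply Set.Subset.antisymm _ hsurj
    rintro y ⟨w, hw, rfl⟩
    exact (himg w (by simpa using hw)).1
  have hncard : (ivlDeltaLRn N c f n x).ncard = RS.card := by
    rw [← himgeq, Set.ncard_image_of_injOn hinj, Set.ncard_coe_finset]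
  -- conclude
  have hc1 : seqComplexity θ (n + 1) = s1.card := by
    rw [seqComplexity, hs1, Set.ncard_eq_toFinset_card _ hFn1]
  have hc2 : seqComplexity θ n = s.card := by
    rw [seqComplexity, hs, Set.ncard_eq_toFinset_card _ hFn]
  rw [hc1, hc2, hncard, hcard, hsum]
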